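/- If ε > 0 and n is a natural number with n > ln(16)/ε², then n − log₂ |I(n,ε)| ≤ (3/ln 2) · exp(−ε²·n/2). In particular, the entropy log₂ |I(n,ε)| of the uniform distribution on I(n,ε) is exponentially close to n. -/

import Mathlib

/-- Hamming weight of a bitstring. -/
def wt {n : ℕ} (y : Fin n → Bool) : ℕ := (Finset.univ.filter fun k => y k = true).card

/-- The set `I(n,ε)` of `n`-bit strings whose Hamming weight `w` satisfies
`|w/n - 1/2| ≤ ε/2`. -/
noncomputable def Iset (n : ℕ) (ε : ℝ) : Finset (Fin n → Bool) :=
  Finset.univ.filter fun y => |((wt y : ℝ) / n) - 1 / 2| ≤ ε / 2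

/-!
Every string outside `I(n,ε)` lies in one of the two tails `±(2 wt y - n) > εn`. Summing the
exponential moment over all strings gives `∑_y e^{c(2 wt y - n)} = (2 cosh c)^n ≤ 2^n e^{c²n/2}`,
so with `c = ±ε` each tail has at most `2^n E` elements, `E = e^{-ε²n/2}`. Hence
`|I(n,ε)| ≥ 2^n (1 - 2E)`; the hypothesis on `n` gives `E < 1/4`, and `log (1 - x) ≥ -3x/2` for
`x ≤ 1/2` turns this into the bound on `n - log₂ |I(n,ε)|`.
-/

open Real Finset

lemma card_filter_le_le_sum_exp_sub {α : Type*} (s : Finset α) (f : α → ℝ) (t : ℝ) :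
    (#(s.filter fun a => t ≤ f a) : ℝ) ≤ ∑ a ∈ s, exp (f a - t) := by
  rw [card_eq_sum_ones, Nat.cast_sum, sum_filter]
  gcongr with a
  split_ifs with h
  · exact_mod_cast one_le_exp (sub_nonneg.mpr h)
  · exact (exp_pos _).le

lemma sum_ite_one_neg_one_eq_two_mul_wt_sub {n : ℕ} (y : Fin n → Bool) :
    ∑ k, (if y k then (1 : ℝ) else -1) = 2 * wt y - n := by
  have h k : (if y k then (1 : ℝ) else -1) = 2 * (if y k then 1 else 0) - 1 := by
    cases y k <;> norm_num
  simp only [h, sum_sub_distrib, ← mul_sum, sum_boole, wt]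
  simp

lemma sum_exp_mul_two_mul_wt_sub (n : ℕ) (c : ℝ) :
    ∑ y : Fin n → Bool, exp (c * (2 * wt y - n)) = (2 * cosh c) ^ n := by
  have h y : exp (c * (2 * wt y - n)) = ∏ k : Fin n, exp (c * if y k then 1 else -1) := by
    rw [← exp_sum, ← mul_sum, sum_ite_one_neg_one_eq_two_mul_wt_sub]
  have hc : ∑ b : Bool, exp (c * if b then 1 else -1) = 2 * cosh c := by
    simp [cosh_eq]; ring
  simp only [h]
  rw [← Fintype.prod_sum (fun (_ : Fin n) (b : Bool) => exp (c * if b then 1 else -1)), hc,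
    prod_const, card_univ, Fintype.card_fin]

/-- For `c > 0` the strings of weight at least `(1 + c) n / 2`, for `c < 0` those of weight at
most `(1 + c) n / 2`. -/
noncomputable def wtTail (n : ℕ) (c : ℝ) : Finset (Fin n → Bool) :=
  {y | c ^ 2 * n ≤ c * (2 * wt y - n)}

lemma card_wtTail_le (n : ℕ) (c : ℝ) : (#(wtTail n c) : ℝ) ≤ 2 ^ n * exp (-c ^ 2 * n / 2) := by
  calc (#(wtTail n c) : ℝ)
      ≤ ∑ y : Fin n → Bool, exp (c * (2 * wt y - n) - c ^ 2 * n) :=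
        card_filter_le_le_sum_exp_sub _ _ _
    _ = (2 * cosh c) ^ n * exp (-(c ^ 2 * n)) := by
        simp only [sub_eq_add_neg _ (c ^ 2 * (n : ℝ)), exp_add, ← sum_mul,
          sum_exp_mul_two_mul_wt_sub]
    _ ≤ (2 * exp (c ^ 2 / 2)) ^ n * exp (-(c ^ 2 * n)) := by
        gcongr
        exact cosh_le_exp_half_sq c
    _ = 2 ^ n * exp (-c ^ 2 * n / 2) := by
        rw [mul_pow, ← exp_nat_mul, mul_assoc, ← exp_add]
        ring_nf

lemma lt_abs_two_mul_wt_sub_of_not_mem_Iset {n : ℕ} (hn : 0 < n) {ε : ℝ} {y : Fin n → Bool}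
    (hy : y ∉ Iset n ε) : ε * n < |2 * (wt y : ℝ) - n| := by
  have hn' : (0 : ℝ) < n := by exact_mod_cast hn
  simp only [Iset, mem_filter, mem_univ, true_and, not_le] at hy
  have h : 2 * (wt y : ℝ) - n = 2 * n * ((wt y : ℝ) / n - 1 / 2) := by
    field_simp
  rw [h, abs_mul, abs_of_pos (by positivity)]
  nlinarith

lemma compl_Iset_subset {n : ℕ} (hn : 0 < n) {ε : ℝ} (hε : 0 < ε) :
    (Iset n ε)ᶜ ⊆ wtTail n ε ∪ wtTail n (-ε) := by
  intro y hy
  have hdev := lt_abs_two_mul_wt_sub_of_not_mem_Iset hn (mem_compl.mp hy)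
  simp only [wtTail, mem_union, mem_filter, mem_univ, true_and, neg_sq]
  rcases lt_abs.mp hdev with h | h
  · left; nlinarith
  · right; nlinarith

lemma card_compl_Iset_le {n : ℕ} (hn : 0 < n) {ε : ℝ} (hε : 0 < ε) :
    (#(Iset n ε)ᶜ : ℝ) ≤ 2 * (2 ^ n * exp (-ε ^ 2 * n / 2)) := by
  have hpos := card_wtTail_le n ε
  have hneg := card_wtTail_le n (-ε)
  rw [neg_sq] at hneg
  calc (#(Iset n ε)ᶜ : ℝ) ≤ #(wtTail n ε ∪ wtTail n (-ε)) := by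
        exact_mod_cast card_le_card (compl_Iset_subset hn hε)
    _ ≤ #(wtTail n ε) + #(wtTail n (-ε)) := by exact_mod_cast card_union_le _ _
    _ ≤ 2 * (2 ^ n * exp (-ε ^ 2 * n / 2)) := by linarith

lemma neg_three_halves_mul_le_log_one_sub {x : ℝ} (h0 : 0 ≤ x) (h1 : x ≤ 1 / 2) :
    -(3 / 2 * x) ≤ log (1 - x) := by
  rw [le_log_iff_exp_le (by linarith), exp_neg]
  have hq : 1 + 3 / 2 * x + (3 / 2 * x) ^ 2 / 2 ≤ exp (3 / 2 * x) :=
    quadratic_le_exp_of_nonneg (by positivity)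
  calc (exp (3 / 2 * x))⁻¹ ≤ (1 + 3 / 2 * x + (3 / 2 * x) ^ 2 / 2)⁻¹ :=
        inv_anti₀ (by positivity) hq
    _ ≤ 1 - x := by
        rw [inv_le_iff_one_le_mul₀ (by positivity)]
        nlinarith

lemma sub_logb_le_of_two_pow_mul_one_sub_le {n : ℕ} {x N : ℝ} (h0 : 0 ≤ x) (h1 : x ≤ 1 / 2)
    (hN : 2 ^ n * (1 - x) ≤ N) : n - logb 2 N ≤ 3 / 2 * x / log 2 := by
  have h1x : 0 < 1 - x := by linarith
  have hlogb : n + log (1 - x) / log 2 ≤ logb 2 N := by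
    calc n + log (1 - x) / log 2 = logb 2 (2 ^ n * (1 - x)) := by
          rw [logb_mul (by positivity) h1x.ne', logb_pow, logb_self_eq_one one_lt_two, logb]
          ring
      _ ≤ logb 2 N := logb_le_logb_of_le one_lt_two (by positivity) hN
  have hlog : -(3 / 2 * x) / log 2 ≤ log (1 - x) / log 2 :=
    div_le_div_of_nonneg_right (neg_three_halves_mul_le_log_one_sub h0 h1) (log_pos one_lt_two).le
  rw [neg_div] at hlog
  linarith

lemma exp_neg_sq_mul_div_two_lt {n : ℕ} {ε : ℝ} (hε : 0 < ε) (hn : log 16 / ε ^ 2 < n) :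
    exp (-ε ^ 2 * n / 2) < 1 / 4 := by
  have h16 : log 16 = 2 * log 4 := by
    rw [show (16 : ℝ) = 4 ^ 2 by norm_num, log_pow, Nat.cast_ofNat]
  have hεn : log 16 < ε ^ 2 * n := (div_lt_iff₀' (by positivity)).mp hn
  calc exp (-ε ^ 2 * n / 2) < exp (-log 4) := exp_lt_exp.mpr (by linarith)
    _ = 1 / 4 := by rw [exp_neg, exp_log (by norm_num), one_div]

/-- If `ε > 0` and `n > ln(16)/ε²`, then
`n − log₂ |I(n,ε)| ≤ (3/ln 2) · exp(−ε²n/2)`: the entropy of the uniform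
distribution on `I(n,ε)` is exponentially close to `n`. -/
theorem entropy_Iset_close_to_n (n : ℕ) (ε : ℝ) (hε : 0 < ε)
    (hn : Real.log 16 / ε ^ 2 < (n : ℝ)) :
    (n : ℝ) - Real.logb 2 ((Iset n ε).card) ≤
      3 / Real.log 2 * Real.exp (-(ε ^ 2) * n / 2) := by
  set E := exp (-ε ^ 2 * n / 2)
  have hn₀ : 0 < n := Nat.cast_pos.mp (lt_trans (by positivity) hn)
  have hE : E < 1 / 4 := exp_neg_sq_mul_div_two_lt hε hn
  have hcard : 2 ^ n * (1 - 2 * E) ≤ #(Iset n ε) := by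
    have hsum : (#(Iset n ε) : ℝ) + #(Iset n ε)ᶜ = 2 ^ n := by
      exact_mod_cast (card_add_card_compl (Iset n ε)).trans (by simp)
    linarith [card_compl_Iset_le hn₀ hε]
  calc (n : ℝ) - logb 2 #(Iset n ε) ≤ 3 / 2 * (2 * E) / log 2 :=
        sub_logb_le_of_two_pow_mul_one_sub_le (by positivity) (by linarith) hcard
    _ = 3 / log 2 * E := by ring
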